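/- arXiv:1911.04321 — 2 statements merged into one kernel-verified Lean document; each statement's English description precedes it below -/
import Mathlib

section
/- Let (X,τ,d) be an extended metric-topological space with (X,τ) compact, let a < b be real numbers, and let Γ be a set of τ-continuous curves γ : [a,b] → X for which there exists a concave, nondecreasing, continuous function ω : [0,∞) → [0,∞) with ω(0) = 0 such that d(γ(r),γ(s)) ≤ ω(|r−s|) for all r, s ∈ [a,b] and all γ ∈ Γ. Then Γ is relatively compact in the space C([a,b];X) of τ-continuous curves endowed with the compact-open topology. -/
open Filter Set Topology
open scoped ENNReal

/-- The Lipschitz constant of `f` on the set `U` with respect to the extended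
(semi)distance `d`. -/
noncomputable def eLip {X : Type*} (d : X → X → ℝ≥0∞) (f : X → ℝ) (U : Set X) : ℝ≥0∞ :=
  sInf {L : ℝ≥0∞ | ∀ y ∈ U, ∀ z ∈ U, ENNReal.ofReal |f y - f z| ≤ L * d y z}

/-- The family of bounded continuous `d`-Lipschitz real functions on `X`. -/
def LipB (X : Type*) [TopologicalSpace X] (d : X → X → ℝ≥0∞) : Set (X → ℝ) :=
  {f | Continuous f ∧ (∃ C : ℝ, ∀ x, |f x| ≤ C) ∧ eLip d f Set.univ ≠ ⊤}

/-- `(X, τ, d)` is an extended metric-topological space: `τ` is Hausdorff, `d` is an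
extended distance, lower semicontinuous w.r.t. the product topology, the bounded
continuous `d`-Lipschitz functions generate the topology, and `d` is recovered as the
supremum of differences of `1`-Lipschitz bounded continuous functions. -/
def IsEMT (X : Type*) [tX : TopologicalSpace X] (d : X → X → ℝ≥0∞) : Prop :=
  T2Space X ∧
  (∀ x, d x x = 0) ∧
  (∀ x y, d x y = d y x) ∧
  (∀ x y z, d x z ≤ d x y + d y z) ∧
  (∀ x y, d x y = 0 → x = y) ∧
  LowerSemicontinuous (fun p : X × X => d p.1 p.2) ∧
  (tX = ⨅ f ∈ LipB X d, TopologicalSpace.induced f inferInstance) ∧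
  (∀ x y, d x y =
    ⨆ f ∈ {g ∈ LipB X d | eLip d g Set.univ ≤ 1}, ENNReal.ofReal |f x - f y|)

/-!
A lower semicontinuous `d` that separates points is bounded below by a positive constant off
any open neighbourhood of the diagonal of the compact space `X × X`. Hence every entourage of the
unique uniformity of the compact Hausdorff space `X` contains a sublevel set `{d < ε}`, so the
modulus `ω` makes `Γ` equicontinuous, and Arzelà–Ascoli applies because `X` is compact.
-/

open scoped Uniformity UniformConvergence

theorem LowerSemicontinuous.exists_pos_setOf_lt_subset {Y : Type*} [TopologicalSpace Y]
    [CompactSpace Y] {f : Y → ℝ≥0∞} (hf : LowerSemicontinuous f) {U : Set Y} (hU : IsOpen U)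
    (hzero : f ⁻¹' {0} ⊆ U) : ∃ ε > 0, {y | f y < ε} ⊆ U := by
  rcases (Uᶜ).eq_empty_or_nonempty with hUc | hUc
  · exact ⟨1, one_pos, compl_empty_iff.mp hUc ▸ subset_univ _⟩
  obtain ⟨m, hmU, hmin⟩ :=
    (hf.lowerSemicontinuousOn _).exists_isMinOn hUc hU.isClosed_compl.isCompact
  refine ⟨f m, pos_iff_ne_zero.mpr fun h => hmU (hzero h), fun y hy => ?_⟩
  by_contra hyU
  exact (hmin hyU).not_gt (mem_ofPred.mp hy)

theorem exists_pos_setOf_lt_subset_of_mem_uniformity {X : Type*} [UniformSpace X]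
    [CompactSpace X] {d : X → X → ℝ≥0∞} (hd : LowerSemicontinuous fun p : X × X => d p.1 p.2)
    (hd_eq : ∀ x y, d x y = 0 → x = y) {V : Set (X × X)} (hV : V ∈ 𝓤 X) :
    ∃ ε > 0, {p : X × X | d p.1 p.2 < ε} ⊆ V := by
  rw [← nhdsSet_diagonal_eq_uniformity] at hV
  obtain ⟨U, hU, hdiagU, hUV⟩ := mem_nhdsSet_iff_exists.mp hV
  obtain ⟨ε, hε, hεU⟩ := hd.exists_pos_setOf_lt_subset hU fun p hp => hdiagU (hd_eq _ _ hp)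
  exact ⟨ε, hε, hεU.trans hUV⟩

theorem equicontinuous_of_modulus {ι T X : Type*} [PseudoMetricSpace T] [UniformSpace X]
    [CompactSpace X] {d : X → X → ℝ≥0∞} (hd : LowerSemicontinuous fun p : X × X => d p.1 p.2)
    (hd_eq : ∀ x y, d x y = 0 → x = y) {F : ι → T → X} {ω : ℝ → ℝ}
    (hω : Tendsto ω (𝓝[≥] 0) (𝓝 0))
    (hF : ∀ i r s, d (F i r) (F i s) ≤ ENNReal.ofReal (ω (dist r s))) :
    Equicontinuous F := by
  intro t V hV
  obtain ⟨ε, hε, hεV⟩ := exists_pos_setOf_lt_subset_of_mem_uniformity hd hd_eq hV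
  have hωε : ∀ᶠ r in 𝓝[≥] 0, ENNReal.ofReal (ω r) < ε := by
    have := (ENNReal.continuous_ofReal.tendsto 0).comp hω
    rw [ENNReal.ofReal_zero] at this
    exact this (Iio_mem_nhds hε)
  obtain ⟨δ, hδ, hδε⟩ := mem_nhdsGE_iff_exists_Ico_subset.mp hωε
  filter_upwards [Metric.ball_mem_nhds t hδ] with s hs i
  exact hεV <| (hF i t s).trans_lt <| hδε ⟨dist_nonneg, by rwa [dist_comm]⟩

theorem ContinuousMap.isCompact_closure_of_equicontinuous {Y α : Type*} [TopologicalSpace Y]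
    [CompactlyCoherentSpace Y] [UniformSpace α] [CompactSpace α] [T2Space α] (Γ : Set C(Y, α))
    (hΓ : Equicontinuous ((↑) : Γ → Y → α)) : IsCompact (closure Γ) :=
  haveI : T2Space (Y →ᵤ[{K : Set Y | IsCompact K}] α) := UniformOnFun.t2Space_of_covering
    (eq_univ_iff_forall.mpr fun y => ⟨{y}, isCompact_singleton, rfl⟩)
  ArzelaAscoli.isCompact_closure_of_isClosedEmbedding (fun _ hK => hK)
    ContinuousMap.isUniformEmbedding_toUniformOnFunIsCompact.isClosedEmbedding
    (fun K _ => hΓ.equicontinuousOn K)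
    (fun _ _ _ _ => ⟨univ, isCompact_univ, fun _ _ => mem_univ _⟩)

theorem stmt8_general {X : Type*} [TopologicalSpace X] [CompactSpace X]
    (d : X → X → ℝ≥0∞) (hX : IsEMT X d)
    (a b : ℝ)
    (Γ : Set C(Set.Icc a b, X))
    (ω : ℝ → ℝ)
    (hω0 : ω 0 = 0)
    (hωcont : ContinuousOn ω (Set.Ici 0))
    (hequi : ∀ γ ∈ Γ, ∀ r s : Set.Icc a b,
      d (γ r) (γ s) ≤ ENNReal.ofReal (ω |(r : ℝ) - (s : ℝ)|)) :
    IsCompact (closure Γ) := by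
  obtain ⟨hT2, -, -, -, hd_eq, hd, -, -⟩ := hX
  let _ : UniformSpace X := uniformSpaceOfCompactR1
  have hω : Tendsto ω (𝓝[≥] 0) (𝓝 0) := by
    simpa only [hω0] using (hωcont 0 self_mem_Ici).tendsto
  refine ContinuousMap.isCompact_closure_of_equicontinuous Γ
    (equicontinuous_of_modulus hd hd_eq hω fun γ r s => ?_)
  simpa only [Subtype.dist_eq, Real.dist_eq] using hequi γ γ.2 r s

theorem stmt8 {X : Type*} [TopologicalSpace X] [CompactSpace X]
    (d : X → X → ℝ≥0∞) (hX : IsEMT X d)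
    (a b : ℝ) (hab : a < b)
    (Γ : Set C(Set.Icc a b, X))
    (ω : ℝ → ℝ)
    (hω0 : ω 0 = 0)
    (hωnn : ∀ r ∈ Set.Ici (0 : ℝ), 0 ≤ ω r)
    (hωcont : ContinuousOn ω (Set.Ici 0))
    (hωmono : MonotoneOn ω (Set.Ici 0))
    (hωconc : ConcaveOn ℝ (Set.Ici 0) ω)
    (hequi : ∀ γ ∈ Γ, ∀ r s : Set.Icc a b,
      d (γ r) (γ s) ≤ ENNReal.ofReal (ω |(r : ℝ) - (s : ℝ)|)) :
    IsCompact (closure Γ) :=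
  stmt8_general d hX a b Γ ω hω0 hωcont hequi
end

section
/- Let (X,τ,d) be an extended metric-topological space, let a < b, and let γ : [a,b] → X be a τ-continuous curve with finite d-variation, Var_d(γ;[a,b]) < ∞. Then the variation function V_γ(t) := Var_d(γ;[a,t]) is continuous on [a,b], and γ is d-continuous: for every t ∈ [a,b], d(γ(s),γ(t)) → 0 as s → t. -/
open Filter Set Topology
open scoped ENNReal

/-- The `d`-variation of the curve `γ` on the set `J ⊆ ℝ`: the supremum of
`∑ d(γ t_{j}, γ t_{j+1})` over all finite increasing sequences of points of `J`. -/
noncomputable def eVar {X : Type*} (d : X → X → ℝ≥0∞) (γ : ℝ → X) (J : Set ℝ) : ℝ≥0∞ :=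
  ⨆ (N : ℕ) (t : Fin (N + 1) → ℝ) (_ : ∀ j, t j ∈ J) (_ : StrictMono t),
    ∑ j : Fin N, d (γ (t j.castSucc)) (γ (t j.succ))

/-!
The variation `V t = Var_d(γ; [a, t])` is monotone, so it is continuous from the left once it is
lower semicontinuous from the left. The latter holds because truncating a near-optimal partition
of `[a, t]` at `s` (replacing each point `u` by `min u s`) gives a partition of `[a, s]` whose sum
is lower semicontinuous in `s`, as `d` is lower semicontinuous and `γ` is continuous. Reversing the orientation gives the
same for `s ↦ Var_d(γ; [s, b])`, and additivity `V s = V b - Var_d(γ; [s, b])` turns this into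
continuity of `V` from the right. Finally `d(γ s, γ t) ≤ |V s - V t|`.
-/

open OrderDual

theorem LowerSemicontinuousWithinAt.continuousWithinAt_of_isMaxOn {β γ : Type*}
    [TopologicalSpace β] [LinearOrder γ] [TopologicalSpace γ] [OrderTopology γ]
    {g : β → γ} {s : Set β} {x : β} (hg : LowerSemicontinuousWithinAt g s x)
    (hmax : IsMaxOn g s x) : ContinuousWithinAt g s x :=
  continuousWithinAt_iff_lower_upperSemicontinuousWithinAt.2
    ⟨hg, fun _ hy => eventually_nhdsWithin_of_forall fun z hz =>
      (isMaxOn_iff.1 hmax z hz).trans_lt hy⟩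

section Order

variable {α : Type*} [LinearOrder α] {E : Type*} [PseudoEMetricSpace E] {f : α → E}

theorem eVariationOn_Icc_add_Icc {a b c : α} (hab : a ≤ b) (hbc : b ≤ c) :
    eVariationOn f (Icc a b) + eVariationOn f (Icc b c) = eVariationOn f (Icc a c) := by
  simpa using eVariationOn.Icc_add_Icc f hab hbc (mem_univ b)

theorem edist_le_eVariationOn_Icc_sub {a s t : α} (has : a ≤ s) (hst : s ≤ t)
    (hs : eVariationOn f (Icc a s) ≠ ∞) :
    edist (f s) (f t) ≤ eVariationOn f (Icc a t) - eVariationOn f (Icc a s) :=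
  (eVariationOn.edist_le f (left_mem_Icc.2 hst) (right_mem_Icc.2 hst)).trans_eq <|
    ENNReal.eq_sub_of_add_eq hs ((add_comm _ _).trans (eVariationOn_Icc_add_Icc has hst))

theorem tendsto_edist_of_continuousWithinAt_eVariationOn [TopologicalSpace α] {a b t : α}
    (ht : t ∈ Icc a b) (hfin : eVariationOn f (Icc a b) ≠ ∞)
    (hV : ContinuousWithinAt (fun s => eVariationOn f (Icc a s)) (Icc a b) t) :
    Tendsto (fun s => edist (f s) (f t)) (𝓝[Icc a b] t) (𝓝 0) := by
  set V := fun s => eVariationOn f (Icc a s)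
  have hVfin : ∀ s ∈ Icc a b, V s ≠ ∞ := fun s hs =>
    ne_top_of_le_ne_top hfin (eVariationOn.mono f (Icc_subset_Icc_right hs.2))
  have hbound : ∀ s ∈ Icc a b, edist (f s) (f t) ≤ (V s - V t) + (V t - V s) := by
    intro s hs
    rcases le_total s t with hst | hts
    · exact (edist_le_eVariationOn_Icc_sub hs.1 hst (hVfin s hs)).trans le_add_self
    · rw [edist_comm]
      exact (edist_le_eVariationOn_Icc_sub ht.1 hts (hVfin t ht)).trans le_self_add
  have hlim : Tendsto (fun s => (V s - V t) + (V t - V s)) (𝓝[Icc a b] t) (𝓝 0) := by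
    have hVt : V t ≠ ∞ := hVfin t ht
    simpa using (ENNReal.Tendsto.sub hV (tendsto_const_nhds (x := V t)) (Or.inl hVt)).add
      (ENNReal.Tendsto.sub (tendsto_const_nhds (x := V t)) hV (Or.inl hVt))
  exact tendsto_of_tendsto_of_tendsto_of_le_of_le' tendsto_const_nhds hlim
    (Eventually.of_forall fun _ => zero_le) (eventually_nhdsWithin_of_forall hbound)

end Order

section Topology

variable {α : Type*} [LinearOrder α] [TopologicalSpace α] [OrderClosedTopology α]
  {E : Type*} [PseudoEMetricSpace E] {f : α → E}

theorem lowerSemicontinuousWithinAt_eVariationOn_Icc_left {a t : α}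
    (hf : LowerSemicontinuousOn (fun p : α × α => edist (f p.1) (f p.2))
      (Icc a t ×ˢ Icc a t)) :
    LowerSemicontinuousWithinAt (fun s => eVariationOn f (Icc a s)) (Icc a t) t := by
  intro r hr
  obtain ⟨⟨n, u, hu, hut⟩, hrn⟩ := lt_iSup_iff.1 hr
  have hat : a ≤ t := (hut 0).1.trans (hut 0).2
  have hmin : ∀ i, ∀ s ∈ Icc a t, min (u i) s ∈ Icc a t := fun i s hs =>
    ⟨le_min (hut i).1 hs.1, (min_le_right _ _).trans hs.2⟩
  have hsum : LowerSemicontinuousWithinAt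
      (fun s => ∑ i ∈ Finset.range n, edist (f (min (u (i + 1)) s)) (f (min (u i) s)))
      (Icc a t) t :=
    lowerSemicontinuousWithinAt_sum fun i _ =>
      (hf _ ⟨hmin _ t ⟨hat, le_rfl⟩, hmin _ t ⟨hat, le_rfl⟩⟩).comp
        (g := fun s => (min (u (i + 1)) s, min (u i) s))
        ((continuous_const.min continuous_id).prodMk
          (continuous_const.min continuous_id)).continuousWithinAt
        fun s hs => ⟨hmin _ s hs, hmin _ s hs⟩
  have hsum_t : r < ∑ i ∈ Finset.range n, edist (f (min (u (i + 1)) t)) (f (min (u i) t)) := by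
    simpa only [min_eq_left (hut _).2] using hrn
  filter_upwards [hsum r hsum_t, self_mem_nhdsWithin] with s hrs hs
  exact hrs.trans_le <| eVariationOn.sum_le (fun i j hij => min_le_min_right s (hu hij))
    fun i => ⟨le_min (hut i).1 hs.1, min_le_right _ _⟩

theorem lowerSemicontinuousWithinAt_eVariationOn_Icc_right {t b : α}
    (hf : LowerSemicontinuousOn (fun p : α × α => edist (f p.1) (f p.2))
      (Icc t b ×ˢ Icc t b)) :
    LowerSemicontinuousWithinAt (fun s => eVariationOn f (Icc s b)) (Icc t b) t := by
  have hdual := lowerSemicontinuousWithinAt_eVariationOn_Icc_left (f := f ∘ ofDual)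
    (a := toDual b) (t := toDual t) <| by
      rw [Icc_toDual]
      exact hf.comp (continuous_ofDual.prodMap continuous_ofDual).continuousOn fun _ hp => hp
  have heq : (fun s => eVariationOn f (Icc s b)) =
      (fun s => eVariationOn (f ∘ ofDual) (Icc (toDual b) s)) ∘ toDual := by
    ext s
    simp [Icc_toDual]
  rw [heq]
  exact hdual.comp continuous_toDual.continuousWithinAt
    fun s (hs : s ∈ Icc t b) => ⟨hs.2, hs.1⟩

theorem continuousOn_eVariationOn_Icc {a b : α}
    (hf : LowerSemicontinuousOn (fun p : α × α => edist (f p.1) (f p.2)) (Icc a b ×ˢ Icc a b))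
    (hfin : eVariationOn f (Icc a b) ≠ ∞) :
    ContinuousOn (fun t => eVariationOn f (Icc a t)) (Icc a b) := by
  intro t ht
  have hat : Icc a t ⊆ Icc a b := Icc_subset_Icc_right ht.2
  have htb : Icc t b ⊆ Icc a b := Icc_subset_Icc_left ht.1
  rw [← Icc_union_Icc_eq_Icc ht.1 ht.2]
  refine ContinuousWithinAt.union ?_ ?_
  · refine (lowerSemicontinuousWithinAt_eVariationOn_Icc_left
      (hf.mono (prod_mono hat hat))).continuousWithinAt_of_isMaxOn ?_
    exact isMaxOn_iff.2 fun s hs => eVariationOn.mono f (Icc_subset_Icc_right hs.2)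
  · have hW : ContinuousWithinAt (fun s => eVariationOn f (Icc s b)) (Icc t b) t := by
      refine (lowerSemicontinuousWithinAt_eVariationOn_Icc_right
        (hf.mono (prod_mono htb htb))).continuousWithinAt_of_isMaxOn ?_
      exact isMaxOn_iff.2 fun s hs => eVariationOn.mono f (Icc_subset_Icc_left hs.1)
    have hsub : ∀ s ∈ Icc t b,
        eVariationOn f (Icc a s) = eVariationOn f (Icc a b) - eVariationOn f (Icc s b) :=
      fun s hs => ENNReal.eq_sub_of_add_eq
        (ne_top_of_le_ne_top hfin (eVariationOn.mono f (Icc_subset_Icc_left (ht.1.trans hs.1))))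
        (eVariationOn_Icc_add_Icc (ht.1.trans hs.1) hs.2)
    exact ContinuousWithinAt.congr (ENNReal.Tendsto.sub tendsto_const_nhds hW (Or.inl hfin))
      hsub (hsub t ⟨le_rfl, ht.2⟩)

end Topology

/-- `X` with the extended pseudometric `d`, as a type synonym so that the metric topology does not
clash with the topology of `X`. -/
def WithEDist {X : Type*} (_d : X → X → ℝ≥0∞) : Type _ := X

noncomputable abbrev WithEDist.pseudoEMetricSpace {X : Type*} {d : X → X → ℝ≥0∞}
    (h0 : ∀ x, d x x = 0) (hsymm : ∀ x y, d x y = d y x)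
    (htri : ∀ x y z, d x z ≤ d x y + d y z) :
    PseudoEMetricSpace (WithEDist d) where
  edist := d
  edist_self := h0
  edist_comm := hsymm
  edist_triangle := htri

theorem eVar_edist_eq_eVariationOn {E : Type*} [PseudoEMetricSpace E] (f : ℝ → E)
    (J : Set ℝ) : eVar edist f J = eVariationOn f J := by
  have hsum : ∀ {N : ℕ} {t : Fin (N + 1) → ℝ} {u : ℕ → ℝ}, (∀ j, t j = u j) →
      ∑ j : Fin N, edist (f (t j.castSucc)) (f (t j.succ)) =
        ∑ i ∈ Finset.range N, edist (f (u (i + 1))) (f (u i)) := by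
    intro N t u htu
    rw [← Fin.sum_univ_eq_sum_range]
    refine Finset.sum_congr rfl fun j _ => ?_
    rw [htu, htu, edist_comm]
    simp
  rw [eVariationOn.eVariationOn_eq_strictMonoOn]
  apply le_antisymm
  · refine iSup_le fun N => iSup_le fun t => iSup_le fun htJ => iSup_le fun ht => ?_
    let u : ℕ → ℝ := fun i => t ⟨min i N, by omega⟩
    have htu : ∀ j, t j = u j := fun j => congrArg t (Fin.ext (min_eq_left j.is_le).symm)
    refine le_iSup_of_le ⟨N, u, fun i hi j hj hij => ht (Fin.mk_lt_mk.2 ?_), fun i _ => htJ _⟩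
      (hsum htu).le
    rw [mem_Iic] at hi hj
    omega
  · refine iSup_le fun ⟨N, u, hu, huJ⟩ => ?_
    have hIic : ∀ j : Fin (N + 1), (j : ℕ) ∈ Iic N := fun j => mem_Iic.2 j.is_le
    exact le_iSup_of_le N <| le_iSup_of_le (fun j : Fin (N + 1) => u j) <|
      le_iSup_of_le (fun j => huJ _ (hIic j)) <|
      le_iSup_of_le (fun i j hij => hu (hIic i) (hIic j) hij) (hsum fun _ => rfl).ge

theorem stmt9_general {X : Type*} [TopologicalSpace X]
    (d : X → X → ℝ≥0∞) (hX : IsEMT X d)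
    (a b : ℝ)
    (γ : ℝ → X) (hγ : ContinuousOn γ (Set.Icc a b))
    (hvar : eVar d γ (Set.Icc a b) ≠ ⊤) :
    ContinuousOn (fun t => eVar d γ (Set.Icc a t)) (Set.Icc a b) ∧
    ∀ t ∈ Set.Icc a b,
      Tendsto (fun s => d (γ s) (γ t)) (𝓝[Set.Icc a b] t) (𝓝 0) := by
  obtain ⟨-, hd0, hsymm, htri, -, hlsc, -, -⟩ := hX
  let := WithEDist.pseudoEMetricSpace hd0 hsymm htri
  have hvariation : ∀ J, eVar d γ J = eVariationOn (E := WithEDist d) γ J :=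
    eVar_edist_eq_eVariationOn (E := WithEDist d) γ
  have hdist : LowerSemicontinuousOn
      (fun p : ℝ × ℝ => edist (α := WithEDist d) (γ p.1) (γ p.2)) (Icc a b ×ˢ Icc a b) :=
    (hlsc.lowerSemicontinuousOn univ).comp (hγ.prodMap hγ) (mapsTo_univ _ _)
  rw [hvariation] at hvar
  have hV := continuousOn_eVariationOn_Icc hdist hvar
  simp only [hvariation]
  refine ⟨hV, fun t ht => ?_⟩
  exact tendsto_edist_of_continuousWithinAt_eVariationOn ht hvar (hV t ht)

theorem stmt9 {X : Type*} [TopologicalSpace X]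
    (d : X → X → ℝ≥0∞) (hX : IsEMT X d)
    (a b : ℝ) (hab : a < b)
    (γ : ℝ → X) (hγ : ContinuousOn γ (Set.Icc a b))
    (hvar : eVar d γ (Set.Icc a b) ≠ ⊤) :
    ContinuousOn (fun t => eVar d γ (Set.Icc a t)) (Set.Icc a b) ∧
    ∀ t ∈ Set.Icc a b,
      Tendsto (fun s => d (γ s) (γ t)) (𝓝[Set.Icc a b] t) (𝓝 0) :=
  stmt9_general d hX a b γ hγ hvar
end
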